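/- Consider the generalized monotone-rate ORFM. Let (x(t), z(t)) be any solution whose trajectory remains in the state space (all x^{pi}_j ∈ [0,1], z_p ≥ 0, z_E ≥ 0), and define V(x,z) = Σ_{p,i,j} |dx^{pi}_j/dt| + Σ_p |dz_p/dt| + |dz_E/dt|, the time derivatives being the components of the vector field evaluated at (x,z). Then t ↦ V(x(t), z(t)) is non-increasing along the solution. -/

import Mathlib

/-- State of the generalized ORFM: codon occupancies `x p i j` (species `p`,
strand `i`, codon `j`, 1-based), pool occupancies `z p`, and the
empty-ribosome pool `zE`. -/
structure GState where
  x : ℕ → ℕ → ℕ → ℝ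
  z : ℕ → ℝ
  zE : ℝ

/-- The generalized monotone-rate ORFM: `M ≥ 1` species, each with `s` strands
of common length `n ≥ 1`; the rates `R0 p i` (initiation, arguments
`(w^{pi}_1, z_p)`), `Rel p i j` for `1 ≤ j ≤ n-1` (elongation, arguments
`(w^{pi}_{j+1}, x^{pi}_j)`), `Rn p i` (termination, argument `x^{pi}_n`),
and `Rp p`, `Rm p` (pool binding/unbinding) are continuously differentiable,
nonnegative, nondecreasing functions of each argument on the physical domain. -/
structure GORFM where
  M : ℕ
  s : ℕ
  n : ℕ
  R0 : ℕ → ℕ → ℝ → ℝ → ℝ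
  Rel : ℕ → ℕ → ℕ → ℝ → ℝ → ℝ
  Rn : ℕ → ℕ → ℝ → ℝ
  Rp : ℕ → ℝ → ℝ
  Rm : ℕ → ℝ → ℝ
  hM : 0 < M
  hn : 0 < n
  hR0_smooth : ∀ p < M, ∀ i < s,
    ContDiffOn ℝ 1 (Function.uncurry (R0 p i)) (Set.Icc 0 1 ×ˢ Set.Ici 0)
  hR0_nonneg : ∀ p < M, ∀ i < s, ∀ a ∈ Set.Icc (0:ℝ) 1, ∀ b ∈ Set.Ici (0:ℝ),
    0 ≤ R0 p i a b
  hR0_mono1 : ∀ p < M, ∀ i < s, ∀ b ∈ Set.Ici (0:ℝ),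
    MonotoneOn (fun a => R0 p i a b) (Set.Icc 0 1)
  hR0_mono2 : ∀ p < M, ∀ i < s, ∀ a ∈ Set.Icc (0:ℝ) 1,
    MonotoneOn (R0 p i a) (Set.Ici 0)
  hRel_smooth : ∀ p < M, ∀ i < s, ∀ j, 1 ≤ j → j ≤ n - 1 →
    ContDiffOn ℝ 1 (Function.uncurry (Rel p i j)) (Set.Icc 0 1 ×ˢ Set.Icc 0 1)
  hRel_nonneg : ∀ p < M, ∀ i < s, ∀ j, 1 ≤ j → j ≤ n - 1 →
    ∀ a ∈ Set.Icc (0:ℝ) 1, ∀ b ∈ Set.Icc (0:ℝ) 1, 0 ≤ Rel p i j a b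
  hRel_mono1 : ∀ p < M, ∀ i < s, ∀ j, 1 ≤ j → j ≤ n - 1 →
    ∀ b ∈ Set.Icc (0:ℝ) 1, MonotoneOn (fun a => Rel p i j a b) (Set.Icc 0 1)
  hRel_mono2 : ∀ p < M, ∀ i < s, ∀ j, 1 ≤ j → j ≤ n - 1 →
    ∀ a ∈ Set.Icc (0:ℝ) 1, MonotoneOn (Rel p i j a) (Set.Icc 0 1)
  hRn_smooth : ∀ p < M, ∀ i < s, ContDiffOn ℝ 1 (Rn p i) (Set.Icc 0 1)
  hRn_nonneg : ∀ p < M, ∀ i < s, ∀ a ∈ Set.Icc (0:ℝ) 1, 0 ≤ Rn p i a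
  hRn_mono : ∀ p < M, ∀ i < s, MonotoneOn (Rn p i) (Set.Icc 0 1)
  hRp_smooth : ∀ p < M, ContDiffOn ℝ 1 (Rp p) (Set.Ici 0)
  hRp_nonneg : ∀ p < M, ∀ a ∈ Set.Ici (0:ℝ), 0 ≤ Rp p a
  hRp_mono : ∀ p < M, MonotoneOn (Rp p) (Set.Ici 0)
  hRm_smooth : ∀ p < M, ContDiffOn ℝ 1 (Rm p) (Set.Ici 0)
  hRm_nonneg : ∀ p < M, ∀ a ∈ Set.Ici (0:ℝ), 0 ≤ Rm p a
  hRm_mono : ∀ p < M, MonotoneOn (Rm p) (Set.Ici 0)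

/-- Ribosomal flux from codon `k` to `k+1` on strand `(p,i)` (`k = 0`:
initiation, `k = n`: termination); vacancies are `w^{pi}_j = 1 - x^{pi}_j`. -/
noncomputable def GORFM.flow (S : GORFM) (st : GState) (p i k : ℕ) : ℝ :=
  if k = 0 then S.R0 p i (1 - st.x p i 1) (st.z p)
  else if k = S.n then S.Rn p i (st.x p i S.n)
  else S.Rel p i k (1 - st.x p i (k + 1)) (st.x p i k)

/-- Codon component `dx^{pi}_j/dt` of the generalized ORFM vector field. -/
noncomputable def GORFM.fx (S : GORFM) (st : GState) (p i j : ℕ) : ℝ :=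
  S.flow st p i (j - 1) - S.flow st p i j

/-- Pool component `dz_p/dt` of the generalized ORFM vector field. -/
noncomputable def GORFM.fz (S : GORFM) (st : GState) (p : ℕ) : ℝ :=
  S.Rp p st.zE - S.Rm p (st.z p)
    + ∑ i ∈ Finset.range S.s, (S.flow st p i S.n - S.flow st p i 0)

/-- Empty-pool component `dz_E/dt` of the generalized ORFM vector field. -/
noncomputable def GORFM.fzE (S : GORFM) (st : GState) : ℝ :=
  ∑ p ∈ Finset.range S.M, S.Rm p (st.z p) - ∑ p ∈ Finset.range S.M, S.Rp p st.zE

/-- Membership in the state space: codon occupancies in `[0,1]`, pools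
nonnegative. -/
def GORFM.inOmega (S : GORFM) (st : GState) : Prop :=
  (∀ p < S.M, ∀ i < S.s, ∀ j, 1 ≤ j → j ≤ S.n → st.x p i j ∈ Set.Icc (0:ℝ) 1)
    ∧ 0 ≤ st.zE ∧ ∀ p < S.M, 0 ≤ st.z p

/-- A (forward-time) solution of the generalized ORFM. -/
def GORFM.isSolution (S : GORFM) (traj : ℝ → GState) : Prop :=
  (∀ t, 0 ≤ t → ∀ p < S.M, ∀ i < S.s, ∀ j, 1 ≤ j → j ≤ S.n →
      HasDerivAt (fun τ => (traj τ).x p i j) (S.fx (traj t) p i j) t)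
    ∧ (∀ t, 0 ≤ t → ∀ p < S.M,
        HasDerivAt (fun τ => (traj τ).z p) (S.fz (traj t) p) t)
    ∧ ∀ t, 0 ≤ t → HasDerivAt (fun τ => (traj τ).zE) (S.fzE (traj t)) t

/-- The Lyapunov function `V`: the sum of the absolute values of all
components of the generalized ORFM vector field. -/
noncomputable def GORFM.V (S : GORFM) (st : GState) : ℝ :=
  (∑ p ∈ Finset.range S.M, ∑ i ∈ Finset.range S.s,
      ∑ j ∈ Finset.Icc 1 S.n, |S.fx st p i j|)
    + ∑ p ∈ Finset.range S.M, |S.fz st p| + |S.fzE st|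

/-!
Read the ORFM as a conservative flow network: the nodes are the codons, the pools and the
empty pool, each reaction rate is the flow `g_e` along an edge `e`, and every component `v_k` of
the vector field is the net inflow into node `k`. Along a solution, the chain rule and the
monotonicity of the rates give each edge flow a right derivative `α v_src - β v_dst` with
`α, β ≥ 0`. Now `V = ∑ |v_k|` is the maximum over sign patterns `σ` of
`∑ σ_k v_k = ∑_e (σ_dst - σ_src) g_e`, and for a pattern attaining the maximum every edge
contributes `α (σ_dst v_src - |v_src|) + β (σ_src v_dst - |v_dst|) ≤ 0` to the derivative.
A finite maximum of continuous functions whose maximal members have nonpositive right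
derivatives is antitone.
-/

open Set Filter Topology Finset

theorem MonotoneOn.exists_nonneg_hasDerivWithinAt_comp {F u : ℝ → ℝ} {s T : Set ℝ} {t d : ℝ}
    (hm : MonotoneOn F s) (hs : UniqueDiffOn ℝ s) (hF : DifferentiableOn ℝ F s)
    (hu : HasDerivWithinAt u d T t) (hmap : MapsTo u T s) (ht : t ∈ T) :
    ∃ c, 0 ≤ c ∧ HasDerivWithinAt (fun τ => F (u τ)) (c * d) T t := by
  have hFd := (hF (u t) (hmap ht)).hasDerivWithinAt
  exact ⟨_, hFd.nonneg_of_monotoneOn (hs _ (hmap ht)).accPt hm, hFd.comp t hu hmap⟩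

theorem exists_nonneg_hasDerivWithinAt_comp₂ {F : ℝ → ℝ → ℝ} {u₁ u₂ : ℝ → ℝ}
    {s₁ s₂ T : Set ℝ} {t d₁ d₂ : ℝ}
    (hm₁ : ∀ b ∈ s₂, MonotoneOn (F · b) s₁) (hm₂ : ∀ a ∈ s₁, MonotoneOn (F a) s₂)
    (hs₁ : UniqueDiffOn ℝ s₁) (hs₂ : UniqueDiffOn ℝ s₂)
    (hF : DifferentiableOn ℝ (Function.uncurry F) (s₁ ×ˢ s₂))
    (hu₁ : HasDerivWithinAt u₁ d₁ T t) (hu₂ : HasDerivWithinAt u₂ d₂ T t)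
    (hmap : MapsTo (fun τ => (u₁ τ, u₂ τ)) T (s₁ ×ˢ s₂)) (ht : t ∈ T) :
    ∃ c₁ c₂, 0 ≤ c₁ ∧ 0 ≤ c₂ ∧
      HasDerivWithinAt (fun τ => F (u₁ τ) (u₂ τ)) (c₁ * d₁ + c₂ * d₂) T t := by
  obtain ⟨hq₁, hq₂⟩ := hmap ht
  set D := fderivWithin ℝ (Function.uncurry F) (s₁ ×ˢ s₂) (u₁ t, u₂ t)
  have hFd : HasFDerivWithinAt (Function.uncurry F) D (s₁ ×ˢ s₂) (u₁ t, u₂ t) :=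
    (hF _ (hmap ht)).hasFDerivWithinAt
  have hpartial₁ : HasDerivWithinAt (F · (u₂ t)) (D (1, 0)) s₁ (u₁ t) :=
    (hFd.comp_hasDerivWithinAt (u₁ t) (((hasDerivWithinAt_id _ _).prodMk
      (hasDerivWithinAt_const _ _ (u₂ t)) : HasDerivWithinAt (fun a => (a, u₂ t)) (1, 0) s₁ _))
      fun _ ha => mk_mem_prod ha hq₂ :)
  have hpartial₂ : HasDerivWithinAt (F (u₁ t)) (D (0, 1)) s₂ (u₂ t) :=
    (hFd.comp_hasDerivWithinAt (u₂ t) (((hasDerivWithinAt_const _ _ (u₁ t)).prodMk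
      (hasDerivWithinAt_id _ _) : HasDerivWithinAt (fun b => (u₁ t, b)) (0, 1) s₂ _))
      fun _ hb => mk_mem_prod hq₁ hb :)
  have hsplit : D (d₁, d₂) = D (1, 0) * d₁ + D (0, 1) * d₂ := by
    have : ((d₁, d₂) : ℝ × ℝ) = d₁ • (1, 0) + d₂ • (0, 1) := by ext <;> simp
    rw [this, map_add, map_smul, map_smul, smul_eq_mul, smul_eq_mul, mul_comm, mul_comm d₂]
  refine ⟨D (1, 0), D (0, 1), hpartial₁.nonneg_of_monotoneOn (hs₁ _ hq₁).accPt (hm₁ _ hq₂),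
    hpartial₂.nonneg_of_monotoneOn (hs₂ _ hq₂).accPt (hm₂ _ hq₁), ?_⟩
  rw [← hsplit]
  exact hFd.comp_hasDerivWithinAt t (hu₁.prodMk hu₂) hmap

section FiniteMax

variable {ι : Type*} {I : Finset ι} {f : ι → ℝ → ℝ}

theorem eventually_finset_sup'_lt_add_mul_sub (hI : I.Nonempty) {x r : ℝ} (hr : 0 < r)
    (hcont : ∀ i ∈ I, ContinuousWithinAt (f i) (Ioi x) x)
    (hderiv : ∀ i ∈ I, f i x = I.sup' hI (f · x) →
      ∃ d ≤ 0, HasDerivWithinAt (f i) d (Ioi x) x) :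
    ∀ᶠ z in 𝓝[>] x, I.sup' hI (f · z) < I.sup' hI (f · x) + r * (z - x) := by
  simp_rw [sup'_lt_iff, eventually_all_finset]
  intro i hi
  rcases (le_sup' (f · x) hi).eq_or_lt with hactive | hinactive
  · obtain ⟨d, hd, hfd⟩ := hderiv i hi hactive
    filter_upwards [hfd.limsup_slope_le' (lt_irrefl x) (hd.trans_lt hr), self_mem_nhdsWithin]
      with z hslope hzx
    rw [slope_def_field, div_lt_iff₀ (sub_pos.2 hzx)] at hslope
    linarith
  · filter_upwards [(hcont i hi).eventually (gt_mem_nhds hinactive), self_mem_nhdsWithin]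
      with z hz hzx
    nlinarith [mem_Ioi.1 hzx]

theorem antitoneOn_finset_sup'_of_hasDerivWithinAt_nonpos (hI : I.Nonempty) {a : ℝ}
    (hcont : ∀ i ∈ I, ContinuousOn (f i) (Ici a))
    (hderiv : ∀ i ∈ I, ∀ x, a ≤ x → f i x = I.sup' hI (f · x) →
      ∃ d ≤ 0, HasDerivWithinAt (f i) d (Ici x) x) :
    AntitoneOn (fun x => I.sup' hI (f · x)) (Ici a) := by
  intro t₁ ht₁ t₂ _ h₁₂
  have hslope : ∀ x ∈ Ico t₁ t₂, ∀ r > 0,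
      ∃ᶠ z in 𝓝[>] x, slope (fun x => I.sup' hI (f · x)) x z < r := by
    intro x hx r hr
    have hax : a ≤ x := le_trans ht₁ hx.1
    have hIoi : Ioi x ⊆ Ici a := fun z hz => le_trans hax (le_of_lt hz)
    refine Eventually.frequently ?_
    filter_upwards [eventually_finset_sup'_lt_add_mul_sub hI (half_pos hr)
      (fun i hi => (hcont i hi x hax).mono hIoi)
      (fun i hi hact => (hderiv i hi x hax hact).imp fun d ⟨hd, hfd⟩ => ⟨hd, hfd.Ioi_of_Ici⟩),
      self_mem_nhdsWithin] with z hz hzx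
    rw [slope_def_field, div_lt_iff₀ (sub_pos.2 hzx)]
    nlinarith [mem_Ioi.1 hzx]
  exact image_le_of_liminf_slope_right_le_deriv_boundary
    ((ContinuousOn.finset_sup'_apply hI hcont).mono fun z hz => le_trans ht₁ hz.1) le_rfl
    continuousOn_const (fun x _ => hasDerivWithinAt_const x _ _) hslope (right_mem_Icc.2 h₁₂)

end FiniteMax

theorem sum_abs_eq_sup'_powerset {K : Type*} [DecidableEq K] (s : Finset K) (v : K → ℝ) :
    ∑ k ∈ s, |v k| = s.powerset.sup' ⟨∅, empty_mem_powerset s⟩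
      (fun P => ∑ k ∈ s, (if k ∈ P then 1 else -1) * v k) := by
  refine le_antisymm (le_sup'_of_le _ (mem_powerset.2 (filter_subset (0 ≤ v ·) s)) ?_)
    (sup'_le _ _ fun P _ => sum_le_sum fun k _ => ?_)
  · refine (sum_congr rfl fun k hk => ?_).le
    by_cases hv : 0 ≤ v k
    · simp [hk, hv, abs_of_nonneg hv]
    · simp [hk, hv, abs_of_neg (not_le.1 hv)]
  · split_ifs
    · simpa using le_abs_self (v k)
    · simpa using neg_le_abs (v k)

theorem mul_le_abs_of_abs_le_one {σ v : ℝ} (hσ : |σ| ≤ 1) : σ * v ≤ |v| :=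
  (le_abs_self _).trans (by rw [abs_mul]; exact mul_le_of_le_one_left (abs_nonneg v) hσ)

theorem mul_eq_abs_of_sum_mul_eq_sum_abs {K : Type*} {s : Finset K} {σ v : K → ℝ}
    (hσ : ∀ k ∈ s, |σ k| ≤ 1) (h : ∑ k ∈ s, σ k * v k = ∑ k ∈ s, |v k|) :
    ∀ k ∈ s, σ k * v k = |v k| :=
  (sum_eq_sum_iff_of_le fun k hk => mul_le_abs_of_abs_le_one (hσ k hk)).1 h

theorem sub_mul_sub_nonpos_of_mul_eq_abs {σs σd vs vd α β : ℝ} (hα : 0 ≤ α) (hβ : 0 ≤ β)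
    (hσs : |σs| ≤ 1) (hσd : |σd| ≤ 1) (hs : σs * vs = |vs|) (hd : σd * vd = |vd|) :
    (σd - σs) * (α * vs - β * vd) ≤ 0 := by
  have h₁ := mul_le_abs_of_abs_le_one (v := vs) hσd
  have h₂ := mul_le_abs_of_abs_le_one (v := vd) hσs
  nlinarith

section FlowNetwork

variable {K E : Type*} [DecidableEq K]

def netInflow (edges : Finset E) (src dst : E → K) (g : E → ℝ) (k : K) : ℝ :=
  ∑ e ∈ edges with dst e = k, g e - ∑ e ∈ edges with src e = k, g e

variable {nodes : Finset K} {edges : Finset E} {src dst : E → K}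

theorem sum_mul_netInflow (hsrc : ∀ e ∈ edges, src e ∈ nodes)
    (hdst : ∀ e ∈ edges, dst e ∈ nodes) (σ : K → ℝ) (g : E → ℝ) :
    ∑ k ∈ nodes, σ k * netInflow edges src dst g k =
      ∑ e ∈ edges, (σ (dst e) - σ (src e)) * g e := by
  have hfiber : ∀ φ : E → K, (∀ e ∈ edges, φ e ∈ nodes) →
      ∑ k ∈ nodes, σ k * ∑ e ∈ edges with φ e = k, g e = ∑ e ∈ edges, σ (φ e) * g e := by
    intro φ hφ
    rw [← sum_fiberwise_of_maps_to hφ]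
    refine sum_congr rfl fun k _ => ?_
    rw [mul_sum]
    exact sum_congr rfl fun e he => by rw [(mem_filter.1 he).2]
  simp only [netInflow, mul_sub, sum_sub_distrib, hfiber dst hdst, hfiber src hsrc, sub_mul]

theorem antitoneOn_sum_abs_of_eq_netInflow {a : ℝ}
    (hsrc : ∀ e ∈ edges, src e ∈ nodes) (hdst : ∀ e ∈ edges, dst e ∈ nodes)
    {g : E → ℝ → ℝ} {v : K → ℝ → ℝ}
    (hv : ∀ k ∈ nodes, ∀ t, a ≤ t → v k t = netInflow edges src dst (g · t) k)
    (hg : ∀ e ∈ edges, ∀ t, a ≤ t → ∃ α β, 0 ≤ α ∧ 0 ≤ β ∧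
      HasDerivWithinAt (g e) (α * v (src e) t - β * v (dst e) t) (Ici a) t) :
    AntitoneOn (fun t => ∑ k ∈ nodes, |v k t|) (Ici a) := by
  set σ : Finset K → K → ℝ := fun P k => if k ∈ P then 1 else -1
  have hσ : ∀ P k, |σ P k| ≤ 1 := fun P k => by by_cases hk : k ∈ P <;> simp [σ, hk]
  have hL : ∀ P, ∀ t ∈ Ici a, ∑ k ∈ nodes, σ P k * v k t =
      ∑ e ∈ edges, (σ P (dst e) - σ P (src e)) * g e t := fun P t ht => by
    rw [← sum_mul_netInflow hsrc hdst]
    exact sum_congr rfl fun k hk => by rw [hv k hk t ht]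
  simp_rw [sum_abs_eq_sup'_powerset nodes]
  refine antitoneOn_finset_sup'_of_hasDerivWithinAt_nonpos _ (fun P _ => ?_)
    (fun P _ x hx hactive => ?_)
  · refine ContinuousOn.congr (continuousOn_finsetSum _ fun e he =>
      continuousOn_const.mul fun t ht => ?_) (hL P)
    obtain ⟨_, _, _, _, hge⟩ := hg e he t ht
    exact hge.continuousWithinAt
  · have hsign := mul_eq_abs_of_sum_mul_eq_sum_abs (fun k _ => hσ P k)
      (hactive.trans (sum_abs_eq_sup'_powerset nodes (v · x)).symm)
    choose! α β hα hβ hge using fun e he => hg e he x hx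
    refine ⟨_, sum_nonpos fun e he => sub_mul_sub_nonpos_of_mul_eq_abs (hα e he) (hβ e he)
      (hσ P _) (hσ P _) (hsign _ (hsrc e he)) (hsign _ (hdst e he)), ?_⟩
    exact ((HasDerivWithinAt.fun_sum fun e he => (hge e he).const_mul _).congr_of_mem (hL P)
      hx).mono (Ici_subset_Ici.2 hx)

end FlowNetwork

namespace GORFM

/-- Nodes: codon `.inl (p, i, j)`, pool `.inr (.inl p)`, empty pool `.inr (.inr ())`. -/
abbrev Node := (ℕ × ℕ × ℕ) ⊕ ℕ ⊕ Unit

/-- Edges: `.inl (p, i, k)` carries `S.flow _ p i k` out of codon `k` (out of the pool when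
`k = 0`) into codon `k + 1` (into the pool when `k = n`); `.inr (.inl p)` is binding from the
empty pool to pool `p`, `.inr (.inr p)` unbinding back. -/
abbrev Edge := (ℕ × ℕ × ℕ) ⊕ ℕ ⊕ ℕ

variable (S : GORFM)

def nodes : Finset Node :=
  (range S.M ×ˢ range S.s ×ˢ Finset.Icc 1 S.n).disjSum ((range S.M).disjSum univ)

def edges : Finset Edge :=
  (range S.M ×ˢ range S.s ×ˢ range (S.n + 1)).disjSum ((range S.M).disjSum (range S.M))

def src : Edge → Node
  | .inl (p, i, k) => if k = 0 then .inr (.inl p) else .inl (p, i, k)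
  | .inr (.inl _) => .inr (.inr ())
  | .inr (.inr p) => .inr (.inl p)

def dst : Edge → Node
  | .inl (p, i, k) => if k = S.n then .inr (.inl p) else .inl (p, i, k + 1)
  | .inr (.inl p) => .inr (.inl p)
  | .inr (.inr _) => .inr (.inr ())

noncomputable def edgeFlow (st : GState) : Edge → ℝ
  | .inl (p, i, k) => S.flow st p i k
  | .inr (.inl p) => S.Rp p st.zE
  | .inr (.inr p) => S.Rm p (st.z p)

noncomputable def field (st : GState) : Node → ℝ
  | .inl (p, i, j) => S.fx st p i j
  | .inr (.inl p) => S.fz st p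
  | .inr (.inr _) => S.fzE st

theorem V_eq_sum_abs_field (st : GState) : S.V st = ∑ k ∈ S.nodes, |S.field st k| := by
  simp [V, nodes, field, sum_disjSum, sum_product, add_assoc]

theorem src_mem_nodes : ∀ e ∈ S.edges, src e ∈ S.nodes := by
  rintro (⟨p, i, k⟩ | p | p) he <;> simp_all [edges, nodes, src]
  split_ifs <;> simp <;> omega

theorem dst_mem_nodes : ∀ e ∈ S.edges, S.dst e ∈ S.nodes := by
  rintro (⟨p, i, k⟩ | p | p) he <;> simp_all [edges, nodes, dst]
  split_ifs <;> simp <;> omega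

theorem field_eq_netInflow (st : GState) :
    ∀ k ∈ S.nodes, S.field st k = netInflow S.edges src S.dst (S.edgeFlow st) k := by
  rintro (⟨p, i, j⟩ | p | ⟨⟩) hk <;> rw [netInflow]
  · obtain ⟨hp, hi, hj₁, hjn⟩ : p < S.M ∧ i < S.s ∧ 1 ≤ j ∧ j ≤ S.n := by simpa [nodes] using hk
    have hin : {e ∈ S.edges | S.dst e = .inl (p, i, j)} = {.inl (p, i, j - 1)} := by
      ext (⟨p', i', k⟩ | p' | p') <;> simp only [mem_filter] <;> simp [edges, dst, ite_eq_iff]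
      omega
    have hout : {e ∈ S.edges | src e = .inl (p, i, j)} = {.inl (p, i, j)} := by
      ext (⟨p', i', k⟩ | p' | p') <;> simp only [mem_filter] <;> simp [edges, src, ite_eq_iff]
      omega
    rw [hin, hout, sum_singleton, sum_singleton]
    rfl
  · have hp : p < S.M := by simpa [nodes] using hk
    simp only [sum_filter, edges, sum_disjSum, sum_product]
    simp [dst, src, edgeFlow, field, fz, ite_eq_iff, and_comm (a := _ = S.n),
      and_comm (a := _ = 0), ite_and, sum_ite_irrel, hp, sum_sub_distrib]
    ring
  · simp only [sum_filter, edges, sum_disjSum, sum_product]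
    simp [dst, src, edgeFlow, field, fzE, ite_eq_iff]

variable {S} {traj : ℝ → GState}

theorem exists_hasDerivWithinAt_flow (hsol : S.isSolution traj)
    (hΩ : ∀ t, 0 ≤ t → S.inOmega (traj t)) {p i k : ℕ} (hp : p < S.M) (hi : i < S.s)
    (hk : k ≤ S.n) {t : ℝ} (ht : 0 ≤ t) :
    ∃ α β, 0 ≤ α ∧ 0 ≤ β ∧ HasDerivWithinAt (fun τ => S.flow (traj τ) p i k)
      (α * S.field (traj t) (src (.inl (p, i, k))) -
        β * S.field (traj t) (S.dst (.inl (p, i, k)))) (Ici 0) t := by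
  have hx : ∀ j, 1 ≤ j → j ≤ S.n →
      HasDerivWithinAt (fun τ => (traj τ).x p i j) (S.fx (traj t) p i j) (Ici 0) t :=
    fun j hj₁ hj₂ => (hsol.1 t ht p hp i hi j hj₁ hj₂).hasDerivWithinAt
  have hxΩ : ∀ j, 1 ≤ j → j ≤ S.n → ∀ τ ∈ Ici (0 : ℝ), (traj τ).x p i j ∈ Set.Icc (0 : ℝ) 1 :=
    fun j hj₁ hj₂ τ hτ => (hΩ τ hτ).1 p hp i hi j hj₁ hj₂
  have hwΩ : ∀ j, 1 ≤ j → j ≤ S.n → ∀ τ ∈ Ici (0 : ℝ),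
      1 - (traj τ).x p i j ∈ Set.Icc (0 : ℝ) 1 := fun j hj₁ hj₂ τ hτ => by
    obtain ⟨h₀, h₁⟩ := hxΩ j hj₁ hj₂ τ hτ
    constructor <;> linarith
  rcases Nat.eq_zero_or_pos k with rfl | hk₀
  · obtain ⟨c₁, c₂, hc₁, hc₂, hd⟩ := exists_nonneg_hasDerivWithinAt_comp₂
      (S.hR0_mono1 p hp i hi) (S.hR0_mono2 p hp i hi) (uniqueDiffOn_Icc zero_lt_one)
      (uniqueDiffOn_Ici 0) ((S.hR0_smooth p hp i hi).differentiableOn one_ne_zero)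
      ((hx 1 le_rfl S.hn).const_sub 1) (hsol.2.1 t ht p hp).hasDerivWithinAt
      (fun τ hτ => ⟨hwΩ 1 le_rfl S.hn τ hτ, (hΩ τ hτ).2.2 p hp⟩) ht
    refine ⟨c₂, c₁, hc₂, hc₁, ?_⟩
    convert hd using 1
    · simp [flow]
    · simp [src, dst, field, S.hn.ne]
      ring
  rcases hk.eq_or_lt with rfl | hkn
  · obtain ⟨c, hc, hd⟩ := (S.hRn_mono p hp i hi).exists_nonneg_hasDerivWithinAt_comp
      (uniqueDiffOn_Icc zero_lt_one) ((S.hRn_smooth p hp i hi).differentiableOn one_ne_zero)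
      (hx S.n S.hn le_rfl) (hxΩ S.n S.hn le_rfl) ht
    refine ⟨c, 0, hc, le_rfl, ?_⟩
    convert hd using 1
    · simp [flow, S.hn.ne']
    · simp [src, dst, field, S.hn.ne']
  · obtain ⟨c₁, c₂, hc₁, hc₂, hd⟩ := exists_nonneg_hasDerivWithinAt_comp₂
      (S.hRel_mono1 p hp i hi k hk₀ (by omega)) (S.hRel_mono2 p hp i hi k hk₀ (by omega))
      (uniqueDiffOn_Icc zero_lt_one) (uniqueDiffOn_Icc zero_lt_one)
      ((S.hRel_smooth p hp i hi k hk₀ (by omega)).differentiableOn one_ne_zero)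
      ((hx (k + 1) (by omega) hkn).const_sub 1) (hx k hk₀ hk)
      (fun τ hτ => ⟨hwΩ (k + 1) (by omega) hkn τ hτ, hxΩ k hk₀ hk τ hτ⟩) ht
    refine ⟨c₂, c₁, hc₂, hc₁, ?_⟩
    convert hd using 1
    · simp [flow, hk₀.ne', hkn.ne]
    · simp [src, dst, field, hk₀.ne', hkn.ne]
      ring

theorem exists_hasDerivWithinAt_edgeFlow (hsol : S.isSolution traj)
    (hΩ : ∀ t, 0 ≤ t → S.inOmega (traj t)) :
    ∀ e ∈ S.edges, ∀ t, 0 ≤ t → ∃ α β, 0 ≤ α ∧ 0 ≤ β ∧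
      HasDerivWithinAt (fun τ => S.edgeFlow (traj τ) e)
        (α * S.field (traj t) (src e) - β * S.field (traj t) (S.dst e)) (Ici 0) t := by
  rintro (⟨p, i, k⟩ | p | p) he t ht <;>
    simp only [edges, inl_mem_disjSum, inr_mem_disjSum, mem_product, Finset.mem_range,
      Order.lt_add_one_iff] at he
  · exact exists_hasDerivWithinAt_flow hsol hΩ he.1 he.2.1 he.2.2 ht
  · obtain ⟨c, hc, hd⟩ := (S.hRp_mono p he).exists_nonneg_hasDerivWithinAt_comp
      (uniqueDiffOn_Ici 0) ((S.hRp_smooth p he).differentiableOn one_ne_zero)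
      (hsol.2.2 t ht).hasDerivWithinAt (fun τ (hτ : τ ∈ Set.Ici 0) => (hΩ τ hτ).2.1) ht
    exact ⟨c, 0, hc, le_rfl, by simpa [edgeFlow, src, field] using hd⟩
  · obtain ⟨c, hc, hd⟩ := (S.hRm_mono p he).exists_nonneg_hasDerivWithinAt_comp
      (uniqueDiffOn_Ici 0) ((S.hRm_smooth p he).differentiableOn one_ne_zero)
      (hsol.2.1 t ht p he).hasDerivWithinAt (fun τ (hτ : τ ∈ Set.Ici 0) => (hΩ τ hτ).2.2 p he) ht
    exact ⟨c, 0, hc, le_rfl, by simpa [edgeFlow, src, field] using hd⟩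

end GORFM

/-- For the generalized monotone-rate ORFM, along any
solution whose trajectory remains in the state space, the function
`t ↦ V(x(t),z(t))` is non-increasing. -/
theorem gorfm_V_is_lyapunov (S : GORFM) (traj : ℝ → GState)
    (hsol : S.isSolution traj)
    (hΩ : ∀ t, 0 ≤ t → S.inOmega (traj t)) :
    ∀ t₁ t₂, 0 ≤ t₁ → t₁ ≤ t₂ → S.V (traj t₂) ≤ S.V (traj t₁) := by
  intro t₁ t₂ h₁ h₁₂
  simp only [GORFM.V_eq_sum_abs_field]
  exact antitoneOn_sum_abs_of_eq_netInflow S.src_mem_nodes S.dst_mem_nodes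
    (fun k hk t _ => S.field_eq_netInflow (traj t) k hk)
    (GORFM.exists_hasDerivWithinAt_edgeFlow hsol hΩ) h₁ (h₁.trans h₁₂) h₁₂
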